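/- Let A = !![a, b; c, 0] be a 2×2 integer matrix with b*c ≠ 0 and gcd(a, gcd(b, c)) = 1. Suppose a² + 4*b*c is not a perfect square, and let D be the unique squarefree integer with a² + 4*b*c = m²*D for some positive integer m. For natural numbers i, j, k and nonzero coprime-as-a-triple integers u, v, w, the equation u•X^i + v•Y^j = w•Z^k has a non-trivial solution (det(X*Y*Z) ≠ 0) in the centralizer C(A) if and only if there exist algebraic integers x, y, z in ℚ(√D), each of the form (s + t√D)/2 with s, t ∈ ℤ and m ∣ t, satisfying x*y*z ≠ 0 and u*x^i + v*y^j = w*z^k. -/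

import Mathlib

/-!
The centralizer of `A = !![a, b; c, 0]` is `ℤ[A] = {p + q • A}` because `(a, b, c)` is primitive,
and `L = (a + m√D) / 2` is a root of the characteristic polynomial `X² - aX - bc` of `A`. The order
`ℤ[L]` is exactly the set of algebraic integers `(s + t√D) / 2` with `m ∣ t`. As `a² + 4bc` is not
a square, `f ↦ f(A)` and `f ↦ f(L)` on `ℤ[X]` both have kernel `(X² - aX - bc)`, and
`det f(A) = f(L) f(L')` vanishes exactly when `f(L)` does; so solutions transfer both ways.
-/

open Polynomial

section MonicQuadratic

variable {S R : Type*} [CommRing S] [Ring R] [Algebra S R] {g : S[X]}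

lemma modByMonic_eq_C_mul_X_add_C_of_natDegree_eq_two (hg : g.Monic) (hg2 : g.natDegree = 2)
    (f : S[X]) : f %ₘ g = C ((f %ₘ g).coeff 1) * X + C ((f %ₘ g).coeff 0) := by
  nontriviality S
  have := natDegree_modByMonic_lt f hg (by rintro rfl; simp at hg2)
  exact eq_X_add_C_of_natDegree_le_one (by omega)

lemma aeval_eq_algebraMap_add_smul_of_natDegree_eq_two (hg : g.Monic) (hg2 : g.natDegree = 2)
    {θ : R} (hθ : aeval θ g = 0) (f : S[X]) :
    aeval θ f = algebraMap S R ((f %ₘ g).coeff 0) + (f %ₘ g).coeff 1 • θ := by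
  rw [← aeval_modByMonic_eq_self_of_root hθ,
    modByMonic_eq_C_mul_X_add_C_of_natDegree_eq_two hg hg2]
  simp [Algebra.smul_def, add_comm]

lemma modByMonic_eq_zero_iff_of_natDegree_eq_two (hg : g.Monic) (hg2 : g.natDegree = 2)
    (f : S[X]) : f %ₘ g = 0 ↔ (f %ₘ g).coeff 0 = 0 ∧ (f %ₘ g).coeff 1 = 0 := by
  constructor
  · intro h; simp [h]
  · rintro ⟨h0, h1⟩
    rw [modByMonic_eq_C_mul_X_add_C_of_natDegree_eq_two hg hg2, h0, h1]
    simp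

lemma aeval_eq_zero_iff_modByMonic_eq_zero (hg : g.Monic) (hg2 : g.natDegree = 2)
    {θ : R} (hθ : aeval θ g = 0)
    (hindep : ∀ p q : S, algebraMap S R p + q • θ = 0 → p = 0 ∧ q = 0) (f : S[X]) :
    aeval θ f = 0 ↔ f %ₘ g = 0 := by
  rw [modByMonic_eq_zero_iff_of_natDegree_eq_two hg hg2,
    aeval_eq_algebraMap_add_smul_of_natDegree_eq_two hg hg2 hθ]
  refine ⟨hindep _ _, fun ⟨h0, h1⟩ => ?_⟩
  simp [h0, h1]

end MonicQuadratic

lemma Int.eq_zero_of_sq_eq_sq_mul {Δ s t : ℤ} (hΔ : ¬ IsSquare Δ) (h : s ^ 2 = t ^ 2 * Δ) :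
    t = 0 := by
  by_contra ht
  refine hΔ (Rat.isSquare_intCast_iff.1 ⟨s / t, ?_⟩)
  have ht' : (t : ℚ) ≠ 0 := by exact_mod_cast ht
  field_simp
  exact_mod_cast (by linear_combination -h : Δ * t ^ 2 = s ^ 2)

lemma Int.exists_mul_add_mul_add_mul_eq_one {a b c : ℤ} (h : Int.gcd a (Int.gcd b c) = 1) :
    ∃ e f g : ℤ, e * a + f * b + g * c = 1 := by
  obtain ⟨u, v, huv⟩ := Int.isCoprime_iff_gcd_eq_one.2 h
  refine ⟨u, v * Int.gcdA b c, v * Int.gcdB b c, ?_⟩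
  rw [Int.gcd_eq_gcd_ab b c] at huv
  linear_combination huv

lemma Int.dvd_of_isIntegral_div {K : Type*} [Field K] [CharZero K] {N n : ℤ} (hn : n ≠ 0)
    (h : IsIntegral ℤ ((N : K) / n)) : n ∣ N := by
  have hq : IsIntegral ℤ ((N : ℚ) / n) := by
    rw [← isIntegral_algebraMap_iff (A := ℚ) (B := K) (algebraMap ℚ K).injective]
    simpa using h
  obtain ⟨y, hy⟩ := IsIntegrallyClosed.isIntegral_iff.1 hq
  refine ⟨y, ?_⟩
  have hn' : (n : ℚ) ≠ 0 := by exact_mod_cast hn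
  rw [eq_intCast, eq_div_iff hn'] at hy
  exact_mod_cast (by linear_combination -hy : (N : ℚ) = n * y)

section TwoByTwo

variable (a b c : ℤ)

lemma charpoly_two_by_two :
    (!![a, b; c, 0]).charpoly = X ^ 2 - C a * X - C (b * c) := by
  rw [Matrix.charpoly_fin_two]
  simp [Matrix.trace_fin_two, Matrix.det_fin_two, sub_eq_add_neg]

lemma det_intCast_add_smul (p q : ℤ) :
    ((p : Matrix (Fin 2) (Fin 2) ℤ) + q • !![a, b; c, 0]).det =
      p ^ 2 + a * p * q - b * c * q ^ 2 := by
  have hM : (p : Matrix (Fin 2) (Fin 2) ℤ) + q • !![a, b; c, 0] =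
      !![p + q * a, q * b; q * c, p] := by
    ext i j
    fin_cases i <;> fin_cases j <;> simp [Matrix.intCast_apply]
  rw [hM, Matrix.det_fin_two_of]
  ring

lemma natDegree_charpoly_two_by_two : (!![a, b; c, 0]).charpoly.natDegree = 2 := by
  rw [Matrix.charpoly_natDegree_eq_dim, Fintype.card_fin]

variable {a b c}

lemma det_intCast_add_smul_eq_zero_iff (hΔ : ¬ IsSquare (a ^ 2 + 4 * b * c)) (p q : ℤ) :
    ((p : Matrix (Fin 2) (Fin 2) ℤ) + q • !![a, b; c, 0]).det = 0 ↔ p = 0 ∧ q = 0 := by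
  rw [det_intCast_add_smul]
  refine ⟨fun h => ?_, fun ⟨hp, hq⟩ => by simp [hp, hq]⟩
  obtain rfl := Int.eq_zero_of_sq_eq_sq_mul hΔ (s := 2 * p + a * q) (t := q)
    (by linear_combination 4 * h)
  simpa using h

lemma exists_eq_intCast_add_smul_of_commute_two_by_two (hgcd : Int.gcd a (Int.gcd b c) = 1)
    {M : Matrix (Fin 2) (Fin 2) ℤ} (hM : !![a, b; c, 0] * M = M * !![a, b; c, 0]) :
    ∃ p q : ℤ, M = p + q • !![a, b; c, 0] := by
  obtain ⟨e, f, g, hefg⟩ := Int.exists_mul_add_mul_add_mul_eq_one hgcd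
  rw [M.eta_fin_two] at hM ⊢
  set x := M 0 0; set y := M 0 1; set z := M 1 0; set w := M 1 1
  simp only [Matrix.mul_fin_two] at hM
  obtain ⟨⟨-, hy⟩, hz, hyz⟩ :
      (_ ∧ a * y + b * w = x * b) ∧ c * x = z * a + w * c ∧ c * y = z * b := by
    simpa [Fin.forall_fin_two] using congrFun₂ hM
  -- `(x - w, y, z)` is proportional to the primitive vector `(a, b, c)`
  set q := e * (x - w) + f * y + g * z
  have hqa : q * a = x - w := by linear_combination (x - w) * hefg + f * hy - g * hz
  have hqb : q * b = y := by linear_combination y * hefg - e * hy - g * hyz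
  have hqc : q * c = z := by linear_combination z * hefg + e * hz + f * hyz
  refine ⟨w, q, ?_⟩
  ext i j
  fin_cases i <;> fin_cases j <;> simp [Matrix.intCast_apply] <;> linarith

variable {D : ℤ} {m : ℕ} {r : ℂ}

lemma aeval_charpoly_half (hr : r ^ 2 = D) (hmD : a ^ 2 + 4 * b * c = (m : ℤ) ^ 2 * D) :
    aeval (((a : ℂ) + m * r) / 2) (!![a, b; c, 0]).charpoly = 0 := by
  have hmD' : (a : ℂ) ^ 2 + 4 * b * c = (m : ℂ) ^ 2 * D := by exact_mod_cast hmD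
  rw [charpoly_two_by_two]
  simp only [eq_intCast, aeval_sub, map_pow, aeval_X, map_mul, map_intCast]
  linear_combination (m : ℂ) ^ 2 / 4 * hr - hmD' / 4

lemma intCast_add_mul_half_eq_zero_iff (hΔ : ¬ IsSquare (a ^ 2 + 4 * b * c)) (hr : r ^ 2 = D)
    (hmD : a ^ 2 + 4 * b * c = (m : ℤ) ^ 2 * D) (p q : ℤ) :
    (p : ℂ) + q * (((a : ℂ) + m * r) / 2) = 0 ↔ p = 0 ∧ q = 0 := by
  refine ⟨fun h => ?_, fun ⟨hp, hq⟩ => by simp [hp, hq]⟩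
  have hsq : (2 * p + a * q) ^ 2 = q ^ 2 * (a ^ 2 + 4 * b * c) := by
    rw [hmD]
    have h' : ((2 * p + a * q : ℤ) : ℂ) = -(q * m * r) := by push_cast; linear_combination 2 * h
    exact_mod_cast (by rw [h']; linear_combination (q : ℂ) ^ 2 * (m : ℂ) ^ 2 * hr :
      ((2 * p + a * q : ℤ) : ℂ) ^ 2 = (q : ℂ) ^ 2 * ((m : ℂ) ^ 2 * D))
  obtain rfl := Int.eq_zero_of_sq_eq_sq_mul hΔ hsq
  simpa using h

lemma aeval_half_eq_zero_iff (hΔ : ¬ IsSquare (a ^ 2 + 4 * b * c)) (hr : r ^ 2 = D)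
    (hmD : a ^ 2 + 4 * b * c = (m : ℤ) ^ 2 * D) (f : ℤ[X]) :
    aeval (((a : ℂ) + m * r) / 2) f = 0 ↔ f %ₘ (!![a, b; c, 0]).charpoly = 0 := by
  refine aeval_eq_zero_iff_modByMonic_eq_zero (Matrix.charpoly_monic _)
    (natDegree_charpoly_two_by_two a b c) (aeval_charpoly_half hr hmD) (fun p q h => ?_) f
  rw [algebraMap_int_eq, eq_intCast, zsmul_eq_mul] at h
  exact (intCast_add_mul_half_eq_zero_iff hΔ hr hmD p q).1 h

lemma det_aeval_two_by_two_eq_zero_iff (hΔ : ¬ IsSquare (a ^ 2 + 4 * b * c)) (f : ℤ[X]) :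
    (aeval !![a, b; c, 0] f).det = 0 ↔ f %ₘ (!![a, b; c, 0]).charpoly = 0 := by
  have hg := Matrix.charpoly_monic !![a, b; c, 0]
  have hg2 := natDegree_charpoly_two_by_two a b c
  rw [aeval_eq_algebraMap_add_smul_of_natDegree_eq_two hg hg2
      (Matrix.aeval_self_charpoly !![a, b; c, 0]), eq_intCast, det_intCast_add_smul_eq_zero_iff hΔ,
    modByMonic_eq_zero_iff_of_natDegree_eq_two hg hg2]

lemma aeval_two_by_two_eq_zero_iff (hΔ : ¬ IsSquare (a ^ 2 + 4 * b * c)) (f : ℤ[X]) :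
    aeval !![a, b; c, 0] f = 0 ↔ f %ₘ (!![a, b; c, 0]).charpoly = 0 := by
  refine ⟨fun h => (det_aeval_two_by_two_eq_zero_iff hΔ f).1 (by simp [h]), fun h => ?_⟩
  rw [← aeval_modByMonic_eq_self_of_root (Matrix.aeval_self_charpoly !![a, b; c, 0]), h,
    map_zero]

lemma commute_two_by_two_iff_exists_aeval_eq (hgcd : Int.gcd a (Int.gcd b c) = 1)
    (M : Matrix (Fin 2) (Fin 2) ℤ) :
    !![a, b; c, 0] * M = M * !![a, b; c, 0] ↔ ∃ f : ℤ[X], aeval !![a, b; c, 0] f = M := by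
  constructor
  · intro hM
    obtain ⟨p, q, rfl⟩ := exists_eq_intCast_add_smul_of_commute_two_by_two hgcd hM
    exact ⟨C p + C q * X, by simp [Algebra.smul_def]⟩
  · rintro ⟨f, rfl⟩
    simpa using ((Commute.all X f).map (aeval !![a, b; c, 0])).eq

lemma exists_aeval_half_eq_of_isIntegral (hr : r ^ 2 = D)
    (hmD : a ^ 2 + 4 * b * c = (m : ℤ) ^ 2 * D) {s q : ℤ}
    (hx : IsIntegral ℤ (((s : ℂ) + (m * q : ℤ) * r) / 2)) :
    ∃ f : ℤ[X], aeval (((a : ℂ) + m * r) / 2) f = ((s : ℂ) + (m * q : ℤ) * r) / 2 := by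
  -- `x² - s x = (q² Δ - s²) / 4` is a rational algebraic integer, which forces `q a ≡ s [ZMOD 2]`
  have hquad : ((q ^ 2 * (a ^ 2 + 4 * b * c) - s ^ 2 : ℤ) : ℂ) / (4 : ℤ) =
      (((s : ℂ) + (m * q : ℤ) * r) / 2) ^ 2 - s * (((s : ℂ) + (m * q : ℤ) * r) / 2) := by
    rw [hmD]; push_cast; linear_combination -(m : ℂ) ^ 2 * (q : ℂ) ^ 2 / 4 * hr
  have h4 : (4 : ℤ) ∣ q ^ 2 * (a ^ 2 + 4 * b * c) - s ^ 2 := by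
    refine Int.dvd_of_isIntegral_div (K := ℂ) (by norm_num) ?_
    rw [hquad]
    exact (hx.pow 2).sub ((isIntegral_intCast s).mul hx)
  obtain ⟨p, hp⟩ : Even (q * a - s) := by
    have : Even ((q * a) ^ 2 - s ^ 2) := by
      obtain ⟨k, hk⟩ := h4
      exact ⟨2 * k - 2 * q ^ 2 * b * c, by linear_combination hk⟩
    simpa [Int.even_sub, Int.even_pow] using this
  refine ⟨C (-p) + C q * X, ?_⟩
  have hp' : (q : ℂ) * a - s = p + p := by exact_mod_cast hp
  simp only [eq_intCast, Int.cast_neg, map_add, aeval_neg, map_intCast, map_mul, aeval_X,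
    Int.cast_mul, Int.cast_natCast]
  linear_combination hp' / 2

lemma exists_isIntegral_half_iff_exists_aeval_eq (hr : r ^ 2 = D)
    (hmD : a ^ 2 + 4 * b * c = (m : ℤ) ^ 2 * D) (x : ℂ) :
    (∃ s t : ℤ, (m : ℤ) ∣ t ∧ IsIntegral ℤ x ∧ x = ((s : ℂ) + t * r) / 2) ↔
      ∃ f : ℤ[X], aeval (((a : ℂ) + m * r) / 2) f = x := by
  constructor
  · rintro ⟨s, _, ⟨q, rfl⟩, hx, rfl⟩
    exact exists_aeval_half_eq_of_isIntegral hr hmD hx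
  · rintro ⟨f, rfl⟩
    have hL := aeval_charpoly_half hr hmD
    have hLint : IsIntegral ℤ (((a : ℂ) + m * r) / 2) := ⟨_, Matrix.charpoly_monic _, hL⟩
    rw [aeval_eq_algebraMap_add_smul_of_natDegree_eq_two (Matrix.charpoly_monic _)
      (natDegree_charpoly_two_by_two a b c) hL]
    set p := (f %ₘ (!![a, b; c, 0]).charpoly).coeff 0
    set q := (f %ₘ (!![a, b; c, 0]).charpoly).coeff 1
    refine ⟨2 * p + q * a, m * q, dvd_mul_right _ _, isIntegral_algebraMap.add (hLint.zsmul q), ?_⟩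
    simp only [eq_intCast, zsmul_eq_mul]
    push_cast
    ring

end TwoByTwo

theorem stmt_7_general (a b c u v w D : ℤ) (m : ℕ)
    (hgcd : Int.gcd a (Int.gcd b c) = 1)
    (hsq : ¬ ∃ k : ℤ, a ^ 2 + 4 * b * c = k ^ 2)
    (hmD : a ^ 2 + 4 * b * c = (m : ℤ) ^ 2 * D)
    (i j k : ℕ) (r : ℂ) (hr : r ^ 2 = (D : ℂ)) :
    (∃ X Y Z : Matrix (Fin 2) (Fin 2) ℤ,
      !![a, b; c, 0] * X = X * !![a, b; c, 0] ∧
      !![a, b; c, 0] * Y = Y * !![a, b; c, 0] ∧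
      !![a, b; c, 0] * Z = Z * !![a, b; c, 0] ∧
      (X * Y * Z).det ≠ 0 ∧
      u • X ^ i + v • Y ^ j = w • Z ^ k) ↔
    (∃ x y z : ℂ,
      (∃ s t : ℤ, (m : ℤ) ∣ t ∧ IsIntegral ℤ x ∧ x = ((s : ℂ) + (t : ℂ) * r) / 2) ∧
      (∃ s t : ℤ, (m : ℤ) ∣ t ∧ IsIntegral ℤ y ∧ y = ((s : ℂ) + (t : ℂ) * r) / 2) ∧
      (∃ s t : ℤ, (m : ℤ) ∣ t ∧ IsIntegral ℤ z ∧ z = ((s : ℂ) + (t : ℂ) * r) / 2) ∧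
      x * y * z ≠ 0 ∧
      (u : ℂ) * x ^ i + (v : ℂ) * y ^ j = (w : ℂ) * z ^ k) := by
  have hΔ : ¬ IsSquare (a ^ 2 + 4 * b * c) := fun ⟨n, hn⟩ => hsq ⟨n, by rw [hn, sq]⟩
  simp only [commute_two_by_two_iff_exists_aeval_eq hgcd,
    exists_isIntegral_half_iff_exists_aeval_eq hr hmD]
  set A := !![a, b; c, 0]
  set L : ℂ := ((a : ℂ) + m * r) / 2
  have hsol : ∀ f₁ f₂ f₃ : ℤ[X],
      ((aeval A f₁ * aeval A f₂ * aeval A f₃).det ≠ 0 ∧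
        u • aeval A f₁ ^ i + v • aeval A f₂ ^ j = w • aeval A f₃ ^ k) ↔
      (aeval L f₁ * aeval L f₂ * aeval L f₃ ≠ 0 ∧
        (u : ℂ) * aeval L f₁ ^ i + v * aeval L f₂ ^ j = w * aeval L f₃ ^ k) := by
    intro f₁ f₂ f₃
    set P := C u * f₁ ^ i + C v * f₂ ^ j - C w * f₃ ^ k
    have hPA : u • aeval A f₁ ^ i + v • aeval A f₂ ^ j = w • aeval A f₃ ^ k ↔ aeval A P = 0 := by
      rw [← sub_eq_zero]; simp [P, Algebra.smul_def]
    have hPL : (u : ℂ) * aeval L f₁ ^ i + v * aeval L f₂ ^ j = w * aeval L f₃ ^ k ↔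
        aeval L P = 0 := by
      rw [← sub_eq_zero]; simp [P]
    rw [hPA, hPL, ← map_mul, ← map_mul, ← map_mul, ← map_mul,
      ne_eq, ne_eq, det_aeval_two_by_two_eq_zero_iff hΔ, aeval_half_eq_zero_iff hΔ hr hmD,
      aeval_two_by_two_eq_zero_iff hΔ, aeval_half_eq_zero_iff hΔ hr hmD]
  constructor
  · rintro ⟨-, -, -, ⟨f₁, rfl⟩, ⟨f₂, rfl⟩, ⟨f₃, rfl⟩, h⟩
    exact ⟨_, _, _, ⟨f₁, rfl⟩, ⟨f₂, rfl⟩, ⟨f₃, rfl⟩, (hsol f₁ f₂ f₃).1 h⟩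
  · rintro ⟨-, -, -, ⟨f₁, rfl⟩, ⟨f₂, rfl⟩, ⟨f₃, rfl⟩, h⟩
    exact ⟨_, _, _, ⟨f₁, rfl⟩, ⟨f₂, rfl⟩, ⟨f₃, rfl⟩, (hsol f₁ f₂ f₃).2 h⟩

theorem stmt_7 (a b c u v w D : ℤ) (m : ℕ) (hm : 0 < m) (hbc : b * c ≠ 0)
    (hgcd : Int.gcd a (Int.gcd b c) = 1)
    (hu : u ≠ 0) (hv : v ≠ 0) (hw : w ≠ 0)
    (huvw : Int.gcd u (Int.gcd v w) = 1)
    (hsq : ¬ ∃ k : ℤ, a ^ 2 + 4 * b * c = k ^ 2)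
    (hD : Squarefree D) (hmD : a ^ 2 + 4 * b * c = (m : ℤ) ^ 2 * D)
    (i j k : ℕ) (r : ℂ) (hr : r ^ 2 = (D : ℂ)) :
    (∃ X Y Z : Matrix (Fin 2) (Fin 2) ℤ,
      !![a, b; c, 0] * X = X * !![a, b; c, 0] ∧
      !![a, b; c, 0] * Y = Y * !![a, b; c, 0] ∧
      !![a, b; c, 0] * Z = Z * !![a, b; c, 0] ∧
      (X * Y * Z).det ≠ 0 ∧
      u • X ^ i + v • Y ^ j = w • Z ^ k) ↔
    (∃ x y z : ℂ,
      (∃ s t : ℤ, (m : ℤ) ∣ t ∧ IsIntegral ℤ x ∧ x = ((s : ℂ) + (t : ℂ) * r) / 2) ∧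
      (∃ s t : ℤ, (m : ℤ) ∣ t ∧ IsIntegral ℤ y ∧ y = ((s : ℂ) + (t : ℂ) * r) / 2) ∧
      (∃ s t : ℤ, (m : ℤ) ∣ t ∧ IsIntegral ℤ z ∧ z = ((s : ℂ) + (t : ℂ) * r) / 2) ∧
      x * y * z ≠ 0 ∧
      (u : ℂ) * x ^ i + (v : ℂ) * y ^ j = (w : ℂ) * z ^ k) :=
  stmt_7_general a b c u v w D m hgcd hsq hmD i j k r hr
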